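/- Suppose Assumptions (A2) and (AV) hold. Then there exists a constant C > 0 such that for any solution (u, m) of the stationary MFG system with congestion, u(x) ≥ −C for all x ∈ 𝕋^d, and furthermore ∫_{𝕋^d} m dx = 1. -/

import Mathlib

open MeasureTheory

noncomputable section

/-- Euclidean space `ℝ^d`, the covering space of the torus `𝕋^d`. -/
abbrev Ed (d : ℕ) := EuclideanSpace ℝ (Fin d)

/-- The unit cube, a fundamental domain for the torus `𝕋^d`. -/
def cube (d : ℕ) : Set (Ed d) := {x | ∀ i, x i ∈ Set.Icc (0 : ℝ) 1}

/-- `ℤ^d`-periodicity: a function on `ℝ^d` descends to the torus `𝕋^d`. -/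
def Per {d : ℕ} {X : Type*} (f : Ed d → X) : Prop :=
  ∀ (x : Ed d) (k : Fin d → ℤ), f (x + (WithLp.equiv 2 (Fin d → ℝ)).symm (fun i => (k i : ℝ))) = f x

/-- The Laplacian of a function `u : ℝ^d → ℝ`. -/
def lap {d : ℕ} (u : Ed d → ℝ) (x : Ed d) : ℝ :=
  ∑ i, fderiv ℝ (fun y => fderiv ℝ u y (EuclideanSpace.single i 1)) x (EuclideanSpace.single i 1)

/-- The divergence of a vector field `g : ℝ^d → ℝ^d`. -/
def dvg {d : ℕ} (g : Ed d → Ed d) (x : Ed d) : ℝ :=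
  ∑ i, fderiv ℝ (fun y => g y i) x (EuclideanSpace.single i 1)

/-- `D_p H`, the gradient of the Hamiltonian in the momentum variable. -/
def Dp {d : ℕ} (H : Ed d → Ed d → ℝ) (x p : Ed d) : Ed d := gradient (H x) p

/-- Smooth, `x`-periodic data `H`, `V` for the MFG system. -/
structure MFGData (d : ℕ) (H : Ed d → Ed d → ℝ) (V : Ed d → ℝ → ℝ) : Prop where
  H_smooth : ContDiff ℝ (⊤ : ℕ∞) (fun q : Ed d × Ed d => H q.1 q.2)
  H_per : ∀ p, Per (fun x => H x p)
  V_smooth : ContDiff ℝ (⊤ : ℕ∞) (fun q : Ed d × ℝ => V q.1 q.2)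
  V_per : ∀ r, Per (fun x => V x r)

/-- A (classical, smooth) solution of the stationary MFG system with congestion:
`u - Δu + m^α H(x, Du/m^α) + V(x,m) = 0`,
`m - Δm - div(m · D_pH(x, Du/m^α)) = 1` on `𝕋^d`, with `m > 0`. -/
structure IsMFGSolution (d : ℕ) (H : Ed d → Ed d → ℝ) (V : Ed d → ℝ → ℝ) (α : ℝ)
    (u m : Ed d → ℝ) : Prop where
  u_smooth : ContDiff ℝ (⊤ : ℕ∞) u
  m_smooth : ContDiff ℝ (⊤ : ℕ∞) m
  u_per : Per u
  m_per : Per m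
  m_pos : ∀ x, 0 < m x
  hjb : ∀ x, u x - lap u x
      + (m x) ^ α * H x (((m x) ^ α)⁻¹ • gradient u x) + V x (m x) = 0
  fp : ∀ x, m x - lap m x
      - dvg (fun y => (m y) • Dp H y (((m y) ^ α)⁻¹ • gradient u y)) x = 1

/-- Assumption (A2): `H(x,0) ≤ 0`. -/
def A2 {d : ℕ} (H : Ed d → Ed d → ℝ) : Prop := ∀ x, H x 0 ≤ 0

/-- Assumption (AV): `V` is globally bounded with bounded derivatives of all orders. -/
def AV {d : ℕ} (V : Ed d → ℝ → ℝ) : Prop :=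
  ∀ n : ℕ, ∃ C > 0, ∀ q : Ed d × ℝ,
    ‖iteratedFDeriv ℝ n (fun q : Ed d × ℝ => V q.1 q.2) q‖ ≤ C

/-- Assumption (A4): `D_pH(x,p)·p − H(x,p) ≥ c H(x,p) − C`. -/
def A4 {d : ℕ} (H : Ed d → Ed d → ℝ) : Prop :=
  ∃ c > 0, ∃ C > 0, ∀ (x p : Ed d), (inner ℝ (Dp H x p) p : ℝ) - H x p ≥ c * H x p - C

/-- Assumption (AG): `c|p|^γ − C ≤ H(x,p) ≤ c|p|^γ + C`. -/
def AG {d : ℕ} (H : Ed d → Ed d → ℝ) (γ : ℝ) : Prop :=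
  ∃ c > 0, ∃ C > 0, ∀ (x p : Ed d),
    c * ‖p‖ ^ γ - C ≤ H x p ∧ H x p ≤ c * ‖p‖ ^ γ + C

/-- Assumption (A6): `|D_pH(x,p)| ≤ C|p|^{γ−1} + C`. -/
def A6 {d : ℕ} (H : Ed d → Ed d → ℝ) (γ : ℝ) : Prop :=
  ∃ C > 0, ∀ (x p : Ed d), ‖Dp H x p‖ ≤ C * ‖p‖ ^ (γ - 1) + C

/-- Assumption (Aα): restrictions on the congestion exponent. -/
def Aalpha (d : ℕ) (α γ : ℝ) : Prop :=
  0 < α ∧ α < 2 ∧ (d : ℝ) < 4 + 2 / α ∧ 1 < γ ∧ γ < 1 + 1 / (1 + 2 * α)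

/-- Assumption (A1): positive-definiteness of `D²_pp H` and the congestion inequality. -/
def A1 {d : ℕ} (H : Ed d → Ed d → ℝ) (α : ℝ) : Prop :=
  ∀ (x p : Ed d),
    (∀ q : Ed d, q ≠ 0 → 0 < (inner ℝ (fderiv ℝ (Dp H x) p q) q : ℝ)) ∧
    (inner ℝ (Dp H x p) p : ℝ) - H x p > (α / 4) * (inner ℝ (fderiv ℝ (Dp H x) p p) p : ℝ)

namespace MFGAux

lemma cube_preimage (d : ℕ) :
    cube d = (MeasurableEquiv.toLp 2 (Fin d → ℝ)).symm ⁻¹' (Set.univ.pi fun _ => Set.Icc (0:ℝ) 1) := by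
  ext x
  simp only [cube, Set.mem_setOf_eq, Set.mem_preimage, Set.mem_pi, Set.mem_univ,
    forall_true_left]
  exact Iff.rfl

lemma cube_preimage' (d : ℕ) :
    cube d = (EuclideanSpace.equiv (Fin d) ℝ) ⁻¹' (Set.univ.pi fun _ => Set.Icc (0:ℝ) 1) := by
  ext x
  simp only [cube, Set.mem_setOf_eq, Set.mem_preimage, Set.mem_pi, Set.mem_univ,
    forall_true_left]
  exact Iff.rfl

lemma cube_isCompact (d : ℕ) : IsCompact (cube d) := by
  rw [cube_preimage']
  exact (EuclideanSpace.equiv (Fin d) ℝ).toHomeomorph.isCompact_preimage.2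
    (isCompact_univ_pi fun _ => isCompact_Icc)

lemma cube_measurableSet (d : ℕ) : MeasurableSet (cube d) := by
  rw [cube_preimage]
  exact (MeasurableSet.univ_pi fun _ => measurableSet_Icc).preimage
    (MeasurableEquiv.toLp 2 (Fin d → ℝ)).symm.measurable

lemma cube_volume (d : ℕ) : volume (cube d) = 1 := by
  rw [cube_preimage]
  rw [(EuclideanSpace.volume_preserving_symm_measurableEquiv_toLp (Fin d)).measure_preimage
    (MeasurableSet.univ_pi fun _ => measurableSet_Icc).nullMeasurableSet]
  rw [volume_pi_pi]
  simp [Real.volume_Icc]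

lemma cube_nonempty (d : ℕ) : (cube d).Nonempty :=
  ⟨0, fun i => by simp⟩

lemma fderiv_per {d : ℕ} {F : Type*} [NormedAddCommGroup F] [NormedSpace ℝ F] {f : Ed d → F}
    (hf : Differentiable ℝ f) (hp : Per f) : Per (fderiv ℝ f) := by
  intro x k
  set K : Ed d := (WithLp.equiv 2 (Fin d → ℝ)).symm (fun i => (k i : ℝ)) with hK
  have h1 : (fun y => f (y + K)) = f := funext fun y => hp y k
  have h2 : HasFDerivAt (fun y : Ed d => f (y + K)) (fderiv ℝ f (x + K)) x := by
    have := (hf (x + K)).hasFDerivAt.comp x ((hasFDerivAt_id x).add_const K)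
    simpa [Function.comp_def] using this
  calc fderiv ℝ f (x + K) = fderiv ℝ (fun y => f (y + K)) x := h2.fderiv.symm
    _ = fderiv ℝ f x := by rw [h1]

lemma second_deriv_test {φ ψ : ℝ → ℝ} {L : ℝ}
    (hφ : ∀ t, HasDerivAt φ (ψ t) t) (hψ : HasDerivAt ψ L 0)
    (h0 : ψ 0 = 0) (hmin : ∀ t, φ 0 ≤ φ t) : 0 ≤ L := by
  by_contra hL
  push_neg at hL
  have hs := hasDerivAt_iff_tendsto_slope.mp hψ
  have hev : ∀ᶠ t in nhdsWithin (0:ℝ) (Set.Ioi 0), slope ψ 0 t < 0 := by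
    have h1 : ∀ᶠ z in nhds L, z < 0 := eventually_lt_nhds hL
    exact (hs.mono_left (nhdsWithin_mono 0 (fun t ht => ne_of_gt ht))).eventually h1
  obtain ⟨b, hb, hIoo⟩ := mem_nhdsGT_iff_exists_Ioo_subset.mp hev
  have hb' : (0:ℝ) < b := hb
  have hψneg : ∀ t ∈ Set.Ioo (0:ℝ) b, ψ t < 0 := by
    intro t ht
    have h1 : slope ψ 0 t < 0 := hIoo ht
    rw [slope_def_field, h0, sub_zero, sub_zero] at h1
    rcases div_neg_iff.mp h1 with ⟨_, h3⟩ | ⟨h2, _⟩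
    · exact absurd ht.1 (not_lt.mpr (le_of_lt h3))
    · exact h2
  have hanti : StrictAntiOn φ (Set.Icc 0 b) := by
    apply strictAntiOn_of_deriv_neg (convex_Icc 0 b)
    · exact fun t _ => (hφ t).continuousAt.continuousWithinAt
    · intro t ht
      rw [interior_Icc] at ht
      rw [(hφ t).deriv]
      exact hψneg t ht
  have h2 : φ (b/2) < φ 0 :=
    hanti (show (0:ℝ) ∈ Set.Icc 0 b from ⟨le_rfl, hb'.le⟩)
      (show b/2 ∈ Set.Icc 0 b from ⟨by linarith, by linarith⟩) (by linarith)
  exact absurd (hmin (b/2)) (not_le.mpr h2)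

lemma insertNth_decomp {n : ℕ} (i : Fin (n+1)) (t : ℝ) (y : Fin n → ℝ) :
    i.insertNth t y
      = (i.insertNth (0:ℝ) y + t • (Pi.single i 1 : Fin (n+1) → ℝ) : Fin (n+1) → ℝ) := by
  ext j
  refine Fin.succAboveCases i ?_ ?_ j
  · simp
  · intro j; simp [Pi.single_eq_of_ne (i.succAbove_ne j)]

lemma intCast_single {n : ℕ} (i : Fin n) :
    (fun j => (((Pi.single i 1 : Fin n → ℤ)) j : ℝ)) = (Pi.single i 1 : Fin n → ℝ) := by
  funext j
  by_cases h : j = i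
  · subst h; simp
  · simp [Pi.single_eq_of_ne h]

lemma integral_pd_zero {d : ℕ} (f : Ed d → ℝ) (hf : ContDiff ℝ 1 f) (hper : Per f) (i : Fin d) :
    ∫ x in cube d, fderiv ℝ f x (EuclideanSpace.single i 1) = 0 := by
  obtain ⟨n, rfl⟩ : ∃ n, d = n + 1 := ⟨d - 1, (Nat.succ_pred_eq_of_pos i.pos).symm⟩
  set v : Ed (n+1) := EuclideanSpace.single i 1 with hv
  set S : Set (Fin (n+1) → ℝ) := Set.univ.pi fun _ => Set.Icc (0:ℝ) 1 with hS
  set Q : Set (Fin n → ℝ) := Set.univ.pi fun _ => Set.Icc (0:ℝ) 1 with hQ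
  set F : (Fin (n+1) → ℝ) → ℝ :=
    fun y => fderiv ℝ f ((WithLp.equiv 2 (Fin (n+1) → ℝ)).symm y) v with hF
  have hsymm_cont : Continuous fun y : Fin (n+1) → ℝ =>
      (WithLp.equiv 2 (Fin (n+1) → ℝ)).symm y :=
    (PiLp.continuousLinearEquiv 2 ℝ (fun _ : Fin (n+1) => ℝ)).symm.continuous
  have hFc : Continuous F := by
    have h1 : Continuous (fderiv ℝ f) := hf.continuous_fderiv one_ne_zero
    exact (h1.comp hsymm_cont).clm_apply continuous_const
  -- step 1 : transfer to the pi space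
  have step1 : ∫ x in cube (n+1), fderiv ℝ f x v = ∫ y in S, F y := by
    have h := MeasurePreserving.setIntegral_preimage_emb
      (EuclideanSpace.volume_preserving_symm_measurableEquiv_toLp (Fin (n+1)))
      (MeasurableEquiv.toLp 2 (Fin (n+1) → ℝ)).symm.measurableEmbedding F S
    rw [← cube_preimage] at h
    have hFe : ∀ x : Ed (n+1),
        F ((MeasurableEquiv.toLp 2 (Fin (n+1) → ℝ)).symm x) = fderiv ℝ f x v := by
      intro x
      simp [hF]
    simp_rw [hFe] at h
    exact h
  -- step 2 : separate the i-th coordinate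
  set ψ := MeasurableEquiv.piFinSuccAbove (fun _ : Fin (n+1) => ℝ) i with hψdef
  have hψsymm : ∀ p : ℝ × (Fin n → ℝ), ψ.symm p = i.insertNth p.1 p.2 := fun p => rfl
  have hpre : (ψ.symm) ⁻¹' S = (Set.Icc (0:ℝ) 1) ×ˢ Q := by
    ext p
    obtain ⟨t, y⟩ := p
    simp only [Set.mem_preimage, hψsymm, Set.mem_prod, hS, hQ, Set.mem_pi, Set.mem_univ,
      forall_true_left]
    constructor
    · intro h
      refine ⟨by simpa using h i, fun j => by simpa using h (i.succAbove j)⟩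
    · rintro ⟨h1, h2⟩ j
      refine Fin.succAboveCases i ?_ ?_ j
      · simpa using h1
      · intro j'; simpa using h2 j'
  set G : ℝ × (Fin n → ℝ) → ℝ := fun p => F (i.insertNth p.1 p.2) with hG
  have hGc : Continuous G := by
    apply hFc.comp
    exact Continuous.finInsertNth (A := fun _ : Fin (n+1) => ℝ) i continuous_fst continuous_snd
  have step2 : ∫ y in S, F y = ∫ p in (Set.Icc (0:ℝ) 1) ×ˢ Q, G p := by
    have h := MeasurePreserving.setIntegral_preimage_emb
      ((volume_preserving_piFinSuccAbove (fun _ : Fin (n+1) => ℝ) i).symm)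
      ψ.symm.measurableEmbedding F S
    rw [hpre] at h
    exact h.symm
  -- step 3 : swap the factors
  have step3 : ∫ p in (Set.Icc (0:ℝ) 1) ×ˢ Q, G p = ∫ q in Q ×ˢ (Set.Icc (0:ℝ) 1), G (q.2, q.1) := by
    have hmp : MeasurePreserving (Prod.swap : (Fin n → ℝ) × ℝ → ℝ × (Fin n → ℝ))
        volume volume := by
      rw [Measure.volume_eq_prod, Measure.volume_eq_prod]
      exact Measure.measurePreserving_swap
    have h := MeasurePreserving.setIntegral_preimage_emb hmp
      MeasurableEquiv.prodComm.measurableEmbedding G ((Set.Icc (0:ℝ) 1) ×ˢ Q)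
    rw [Set.preimage_swap_prod] at h
    exact h.symm
  -- step 4 : Fubini
  have hint : IntegrableOn (fun q : (Fin n → ℝ) × ℝ => G (q.2, q.1))
      (Q ×ˢ (Set.Icc (0:ℝ) 1)) volume := by
    apply ContinuousOn.integrableOn_compact
    · exact (isCompact_univ_pi fun _ => isCompact_Icc).prod isCompact_Icc
    · exact (hGc.comp (continuous_snd.prodMk continuous_fst)).continuousOn
  have step4 : ∫ q in Q ×ˢ (Set.Icc (0:ℝ) 1), G (q.2, q.1)
      = ∫ y in Q, ∫ t in Set.Icc (0:ℝ) 1, G (t, y) := by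
    rw [Measure.volume_eq_prod]
    rw [Measure.volume_eq_prod] at hint
    exact setIntegral_prod _ hint
  -- step 5 : inner integral vanishes
  have inner0 : ∀ y : Fin n → ℝ, ∫ t in Set.Icc (0:ℝ) 1, G (t, y) = 0 := by
    intro y
    set c : Ed (n+1) := (WithLp.equiv 2 (Fin (n+1) → ℝ)).symm (i.insertNth 0 y) with hc
    have hGt : ∀ t : ℝ, G (t, y) = fderiv ℝ f (c + t • v) v := by
      intro t
      simp only [hG, hF]
      congr 1
      rw [insertNth_decomp i t y]
      rfl
    have hasD : ∀ t : ℝ, HasDerivAt (fun s => f (c + s • v)) (fderiv ℝ f (c + t • v) v) t := by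
      intro t
      have hline : HasDerivAt (fun s : ℝ => c + s • v) v t := by
        simpa using ((hasDerivAt_id t).smul_const v).const_add c
      exact (hf.differentiable one_ne_zero (c + t • v)).hasFDerivAt.comp_hasDerivAt t hline
    have hcint : Continuous fun t : ℝ => fderiv ℝ f (c + t • v) v := by
      have h1 : Continuous fun t : ℝ => c + t • v :=
        continuous_const.add (continuous_id.smul continuous_const)
      exact ((hf.continuous_fderiv one_ne_zero).comp h1).clm_apply continuous_const
    calc ∫ t in Set.Icc (0:ℝ) 1, G (t, y)
        = ∫ t in Set.Icc (0:ℝ) 1, fderiv ℝ f (c + t • v) v := by simp_rw [hGt]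
      _ = ∫ t in (0:ℝ)..1, fderiv ℝ f (c + t • v) v := by
          rw [integral_Icc_eq_integral_Ioc, ← intervalIntegral.integral_of_le zero_le_one]
      _ = f (c + (1:ℝ) • v) - f (c + (0:ℝ) • v) :=
          intervalIntegral.integral_eq_sub_of_hasDerivAt (fun t _ => hasD t)
            (hcint.intervalIntegrable 0 1)
      _ = 0 := by
          rw [one_smul, zero_smul, add_zero]
          have hper' : f (c + v) = f c := by
            have h := hper c (Pi.single i 1)
            rw [intCast_single i] at h
            exact h
          rw [hper', sub_self]
  rw [step1, step2, step3, step4]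
  simp_rw [inner0]
  simp

lemma integral_dvg_zero' {d : ℕ} (g : Ed d → Ed d)
    (hg : ∀ i, ContDiff ℝ 1 (fun y => g y i)) (hper : ∀ i, Per (fun y => g y i)) :
    ∫ x in cube d, dvg g x = 0 := by
  have hterm : ∀ i : Fin d,
      ∫ x in cube d, fderiv ℝ (fun y => g y i) x (EuclideanSpace.single i 1) = 0 :=
    fun i => integral_pd_zero _ (hg i) (hper i) i
  have hint : ∀ i : Fin d, IntegrableOn
      (fun x => fderiv ℝ (fun y => g y i) x (EuclideanSpace.single i 1)) (cube d) volume := by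
    intro i
    apply ContinuousOn.integrableOn_compact (cube_isCompact d)
    exact ((((hg i).continuous_fderiv one_ne_zero)).clm_apply continuous_const).continuousOn
  calc ∫ x in cube d, dvg g x
      = ∑ i, ∫ x in cube d, fderiv ℝ (fun y => g y i) x (EuclideanSpace.single i 1) := by
        simp only [dvg]
        exact integral_finset_sum _ (fun i _ => hint i)
    _ = 0 := by simp [hterm]

lemma integral_lap_zero' {d : ℕ} (f : Ed d → ℝ) (hf : ContDiff ℝ (⊤ : ℕ∞) f) (hper : Per f) :
    ∫ x in cube d, lap f x = 0 := by
  have hfi : ∀ i : Fin d, ContDiff ℝ 1 (fun y => fderiv ℝ f y (EuclideanSpace.single i 1)) :=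
    fun i => (hf.fderiv_right (by exact WithTop.coe_le_coe.mpr le_top)).clm_apply contDiff_const
  have hperi : ∀ i : Fin d, Per (fun y => fderiv ℝ f y (EuclideanSpace.single i 1)) := by
    intro i x k
    simp only []
    rw [fderiv_per (hf.differentiable (by simp)) hper x k]
  have hterm : ∀ i : Fin d,
      ∫ x in cube d, fderiv ℝ (fun y => fderiv ℝ f y (EuclideanSpace.single i 1)) x
        (EuclideanSpace.single i 1) = 0 :=
    fun i => integral_pd_zero _ (hfi i) (hperi i) i
  have hint : ∀ i : Fin d, IntegrableOn
      (fun x => fderiv ℝ (fun y => fderiv ℝ f y (EuclideanSpace.single i 1)) x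
        (EuclideanSpace.single i 1)) (cube d) volume := by
    intro i
    apply ContinuousOn.integrableOn_compact (cube_isCompact d)
    exact ((((hfi i).continuous_fderiv one_ne_zero)).clm_apply continuous_const).continuousOn
  calc ∫ x in cube d, lap f x
      = ∑ i, ∫ x in cube d, fderiv ℝ (fun y => fderiv ℝ f y (EuclideanSpace.single i 1)) x
        (EuclideanSpace.single i 1) := by
        simp only [lap]
        exact integral_finset_sum _ (fun i _ => hint i)
    _ = 0 := by simp [hterm]

lemma lap_continuous {d : ℕ} (f : Ed d → ℝ) (hf : ContDiff ℝ (⊤ : ℕ∞) f) : Continuous (lap f) := by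
  have hfi : ∀ i : Fin d, ContDiff ℝ 1 (fun y => fderiv ℝ f y (EuclideanSpace.single i 1)) :=
    fun i => (hf.fderiv_right (by exact WithTop.coe_le_coe.mpr le_top)).clm_apply contDiff_const
  unfold lap
  exact continuous_finset_sum _ fun i _ =>
    (((hfi i).continuous_fderiv one_ne_zero)).clm_apply continuous_const

lemma dvg_continuous {d : ℕ} (g : Ed d → Ed d)
    (hg : ∀ i, ContDiff ℝ 1 (fun y => g y i)) : Continuous (dvg g) := by
  unfold dvg
  exact continuous_finset_sum _ fun i _ =>
    (((hg i).continuous_fderiv one_ne_zero)).clm_apply continuous_const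

end MFGAux


open MFGAux in
/-- Proposition 3.1: lower bound for `u` and total mass of `m`. -/
theorem mfg_lower_bound_u_and_mass
    (d : ℕ) (hd : 3 ≤ d)
    (H : Ed d → Ed d → ℝ) (V : Ed d → ℝ → ℝ) (α γ : ℝ)
    (hdata : MFGData d H V) (hα : 0 < α) (hγ : 1 < γ)
    (hA2 : A2 H) (hAV : AV V) :
    ∃ C > 0, ∀ u m : Ed d → ℝ, IsMFGSolution d H V α u m →
      (∀ x, -C ≤ u x) ∧ ∫ x in cube d, m x = 1 := by
  obtain ⟨C₀, hC₀pos, hC₀⟩ := hAV 0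
  refine ⟨C₀, hC₀pos, ?_⟩
  intro u m hsol
  constructor
  · -- the lower bound for `u`
    obtain ⟨x₀, hx₀cube, hminOn⟩ := (cube_isCompact d).exists_isMinOn (cube_nonempty d)
      hsol.u_smooth.continuous.continuousOn
    have hglobal : ∀ x, u x₀ ≤ u x := by
      intro x
      set y : Ed d := (WithLp.equiv 2 (Fin d → ℝ)).symm (fun i => Int.fract (x i)) with hy
      have hycube : y ∈ cube d := by
        intro i
        have hyi : y i = Int.fract (x i) := rfl
        rw [hyi]
        exact ⟨Int.fract_nonneg _, (Int.fract_lt_one _).le⟩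
      have hxy : x = y + (WithLp.equiv 2 (Fin d → ℝ)).symm (fun i => ((⌊x i⌋ : ℤ) : ℝ)) := by
        refine PiLp.ext fun j => ?_
        exact (Int.fract_add_floor (x j)).symm
      calc u x₀ ≤ u y := (isMinOn_iff.mp hminOn) y hycube
        _ = u x := by
            rw [hxy]
            exact (hsol.u_per y fun i => ⌊x i⌋).symm
    have hloc : IsLocalMin u x₀ := Filter.Eventually.of_forall hglobal
    have hfd0 : fderiv ℝ u x₀ = 0 := hloc.fderiv_eq_zero
    have hgr0 : gradient u x₀ = 0 := by
      show (InnerProductSpace.toDual ℝ (Ed d)).symm (fderiv ℝ u x₀) = 0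
      rw [hfd0]
      simp
    have hlap : 0 ≤ lap u x₀ := by
      unfold lap
      refine Finset.sum_nonneg fun i _ => ?_
      set e : Ed d := EuclideanSpace.single i (1:ℝ) with he
      have hline : ∀ t : ℝ, HasDerivAt (fun s : ℝ => x₀ + s • e) e t := fun t => by
        simpa using ((hasDerivAt_id t).smul_const e).const_add x₀
      have h0pt : x₀ + (0:ℝ) • e = x₀ := by rw [zero_smul, add_zero]
      have hΨ : ContDiff ℝ 1 (fun y => fderiv ℝ u y e) :=
        (hsol.u_smooth.fderiv_right (by exact WithTop.coe_le_coe.mpr le_top)).clm_apply contDiff_const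
      have hφ : ∀ t : ℝ, HasDerivAt (fun s => u (x₀ + s • e)) (fderiv ℝ u (x₀ + t • e) e) t :=
        fun t => (hsol.u_smooth.differentiable (by simp)
          (x₀ + t • e)).hasFDerivAt.comp_hasDerivAt t (hline t)
      have hψd : HasDerivAt (fun t : ℝ => fderiv ℝ u (x₀ + t • e) e)
          (fderiv ℝ (fun y => fderiv ℝ u y e) x₀ e) 0 := by
        have h := (hΨ.differentiable one_ne_zero
          (x₀ + (0:ℝ) • e)).hasFDerivAt.comp_hasDerivAt 0 (hline 0)
        rw [h0pt] at h
        exact h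
      refine second_deriv_test hφ hψd ?_ ?_
      · rw [h0pt, hfd0]
        simp
      · intro t
        simpa [h0pt] using hglobal (x₀ + t • e)
    have heq := hsol.hjb x₀
    rw [hgr0, smul_zero] at heq
    have hV : |V x₀ (m x₀)| ≤ C₀ := by
      have h := hC₀ (x₀, m x₀)
      rwa [norm_iteratedFDeriv_zero, Real.norm_eq_abs] at h
    have hm0 : (0:ℝ) ≤ (m x₀) ^ α := (Real.rpow_pos_of_pos (hsol.m_pos x₀) α).le
    have hHle : (m x₀) ^ α * H x₀ 0 ≤ 0 := mul_nonpos_of_nonneg_of_nonpos hm0 (hA2 x₀)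
    have habs := abs_le.mp hV
    intro x
    have hx₀b : -C₀ ≤ u x₀ := by linarith [habs.1]
    linarith [hglobal x]
  · -- the total mass of `m`
    set G : Ed d → Ed d := fun y => (m y) • Dp H y (((m y) ^ α)⁻¹ • gradient u y) with hGdef
    have hgradu : ContDiff ℝ 1 (fun y => gradient u y) := by
      have hfd : ContDiff ℝ 1 (fderiv ℝ u) := hsol.u_smooth.fderiv_right (by exact WithTop.coe_le_coe.mpr le_top)
      exact ((InnerProductSpace.toDual ℝ (Ed d)).symm.contDiff).comp hfd
    have hminv : ContDiff ℝ 1 (fun y => ((m y) ^ α)⁻¹) :=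
      contDiff_iff_contDiffAt.mpr fun y =>
        ((hsol.m_smooth.contDiffAt.of_le (by simp)).rpow_const_of_ne
          (ne_of_gt (hsol.m_pos y))).inv
          (ne_of_gt (Real.rpow_pos_of_pos (hsol.m_pos y) α))
    have hc : ContDiff ℝ 1 (fun y => ((m y) ^ α)⁻¹ • gradient u y) := hminv.smul hgradu
    have hHu : ContDiff ℝ (⊤ : ℕ∞) (Function.uncurry fun (q : Ed d × Ed d) (p : Ed d) => H q.1 p) :=
      hdata.H_smooth.comp ((contDiff_fst.fst).prodMk contDiff_snd)
    have hfdp : ContDiff ℝ 1 (fun q : Ed d × Ed d => fderiv ℝ (H q.1) q.2) :=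
      ContDiff.fderiv (f := fun (q : Ed d × Ed d) (p : Ed d) => H q.1 p)
        (g := fun q : Ed d × Ed d => q.2) hHu contDiff_snd (by exact WithTop.coe_le_coe.mpr le_top)
    have hDpc : ContDiff ℝ 1 (fun q : Ed d × Ed d => Dp H q.1 q.2) :=
      ((InnerProductSpace.toDual ℝ (Ed d)).symm.contDiff).comp hfdp
    have hdpc : ContDiff ℝ 1 (fun y => Dp H y (((m y) ^ α)⁻¹ • gradient u y)) :=
      hDpc.comp (contDiff_id.prodMk hc)
    have hGsmooth : ContDiff ℝ 1 G := (hsol.m_smooth.of_le (by simp)).smul hdpc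
    have hGi : ∀ i, ContDiff ℝ 1 (fun y => G y i) := fun i =>
      (EuclideanSpace.proj (𝕜 := ℝ) i).contDiff.comp hGsmooth
    have hPerGi : ∀ i, Per (fun y => G y i) := by
      intro i x k
      set K : Ed d := (WithLp.equiv 2 (Fin d → ℝ)).symm (fun j => ((k j : ℤ) : ℝ)) with hK
      have hm : m (x + K) = m x := hsol.m_per x k
      have hgr : gradient u (x + K) = gradient u x := by
        show (InnerProductSpace.toDual ℝ (Ed d)).symm (fderiv ℝ u (x + K)) = _
        rw [fderiv_per (hsol.u_smooth.differentiable (by simp)) hsol.u_per x k]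
        rfl
      have hDpp : Dp H (x + K) = Dp H x := by
        have hHfun : H (x + K) = H x := funext fun p => hdata.H_per p x k
        funext p
        show gradient (H (x + K)) p = gradient (H x) p
        rw [hHfun]
      show G (x + K) i = G x i
      rw [hGdef]
      simp only [hm, hgr, hDpp]
    have key : Set.EqOn m (fun x => 1 + (lap m x + dvg G x)) (cube d) := by
      intro x _
      have h := hsol.fp x
      show m x = 1 + (lap m x + dvg G x)
      rw [hGdef]
      linarith [h]
    rw [setIntegral_congr_fun (cube_measurableSet d) key]
    have hI1 : IntegrableOn (fun _ : Ed d => (1:ℝ)) (cube d) volume :=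
      ContinuousOn.integrableOn_compact (cube_isCompact d) continuous_const.continuousOn
    have hIlap : IntegrableOn (lap m) (cube d) volume :=
      ContinuousOn.integrableOn_compact (cube_isCompact d)
        (lap_continuous m hsol.m_smooth).continuousOn
    have hIdvg : IntegrableOn (dvg G) (cube d) volume :=
      ContinuousOn.integrableOn_compact (cube_isCompact d) (dvg_continuous G hGi).continuousOn
    have hsum : IntegrableOn (fun x : Ed d => lap m x + dvg G x) (cube d) volume :=
      hIlap.add hIdvg
    rw [integral_add hI1 hsum, integral_add hIlap hIdvg]
    rw [integral_lap_zero' m hsol.m_smooth hsol.m_per, integral_dvg_zero' G hGi hPerGi]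
    rw [setIntegral_const, measureReal_def, cube_volume]
    simp
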